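/- arXiv:2411.11627 — 5 statements merged into one kernel-verified Lean document; each statement's English description precedes it below -/
import Mathlib

section
/- Let G be a finite simple graph on n vertices whose adjacency matrix has maximum eigenvalue at most λ. Then there exists an orientation of the edges of G such that every vertex has out-degree at most λ. -/
/-!
Testing the quadratic form on the indicator vector of a vertex set `S` shows that the induced
subgraph on `S` has average degree at most `λ`, so some vertex has at most `λ` neighbours in `S`.
Removing such vertices one after another ranks the vertices so that each has at most `λ`
neighbours of higher rank; orienting every edge away from its endpoint of lower rank then bounds
all out-degrees by `λ`.
-/

open Matrix Finset

namespace Sym2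

variable {V β : Type*} [LinearOrder β]

def lowerEnd (r : V → β) (hr : Function.Injective r) : Sym2 V → V :=
  Sym2.lift ⟨fun a b => if r a ≤ r b then a else b, fun a b => by
    dsimp only
    split_ifs with hab hba hba
    · exact hr (le_antisymm hab hba)
    · rfl
    · rfl
    · exact absurd (le_of_not_ge hab) hba⟩

variable {r : V → β} (hr : Function.Injective r)

@[simp]
theorem lowerEnd_mk (a b : V) : lowerEnd r hr s(a, b) = if r a ≤ r b then a else b := rfl

theorem lowerEnd_mem (e : Sym2 V) : lowerEnd r hr e ∈ e := by
  induction e using Sym2.ind with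
  | h a b => rw [lowerEnd_mk]; split_ifs <;> simp

end Sym2

namespace SimpleGraph

section Degeneracy

variable {V : Type*} [DecidableEq V] (G : SimpleGraph V) [DecidableRel G.Adj]

theorem exists_rank_injOn_of_forall_exists_card_adj_le {k : ℝ}
    (hsparse : ∀ S : Finset V, S.Nonempty → ∃ v ∈ S, (#{u ∈ S | G.Adj v u} : ℝ) ≤ k)
    (S : Finset V) :
    ∃ r : V → ℕ, Set.InjOn r S ∧ ∀ v ∈ S, (#{u ∈ S | G.Adj v u ∧ r v < r u} : ℝ) ≤ k := by
  induction S using Finset.strongInduction with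
  | H S ih =>
  rcases S.eq_empty_or_nonempty with rfl | hS
  · exact ⟨0, by simp, by simp⟩
  obtain ⟨v₀, hv₀, hv₀k⟩ := hsparse S hS
  obtain ⟨r, hr_inj, hr_le⟩ := ih (S.erase v₀) (erase_ssubset hv₀)
  -- `v₀` gets the lowest rank, below all of `S.erase v₀`
  refine ⟨fun u => if u = v₀ then 0 else r u + 1, ?_, fun v hv => ?_⟩
  · intro a ha b hb hab
    by_cases a = v₀ <;> by_cases b = v₀ <;> simp_all [hr_inj.eq_iff]
  by_cases hv₀v : v = v₀
  · subst hv₀v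
    refine le_trans ?_ hv₀k
    exact_mod_cast card_le_card (monotone_filter_right _ fun _ _ => And.left)
  · refine le_trans ?_ (hr_le v (mem_erase.2 ⟨hv₀v, hv⟩))
    gcongr
    intro u
    simp only [mem_filter, mem_erase, hv₀v, if_false]
    rintro ⟨hu, hadj, hlt⟩
    have hu₀ : u ≠ v₀ := by rintro rfl; simp at hlt
    simp_all

end Degeneracy

variable {V : Type*} [Fintype V] [DecidableEq V] (G : SimpleGraph V) [DecidableRel G.Adj]

theorem card_filter_lowerEnd_eq_le {β : Type*} [LinearOrder β] {r : V → β}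
    (hr : Function.Injective r) (v : V) :
    #{e ∈ G.edgeFinset | Sym2.lowerEnd r hr e = v} ≤ #{u | G.Adj v u ∧ r v < r u} := by
  refine (card_le_card fun e he => ?_).trans (card_image_le (f := fun u => s(v, u)))
  induction e using Sym2.ind with
  | h a b =>
  rw [mem_filter, mem_edgeFinset, mem_edgeSet, Sym2.lowerEnd_mk] at he
  obtain ⟨hadj, hv⟩ := he
  have hne : r a ≠ r b := fun h => hadj.ne (hr h)
  simp only [mem_image, mem_filter, mem_univ, true_and]
  split_ifs at hv with hab
  · exact ⟨b, ⟨hv ▸ hadj, hv ▸ lt_of_le_of_ne hab hne⟩, by rw [hv]⟩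
  · exact ⟨a, ⟨hv ▸ hadj.symm, hv ▸ lt_of_not_ge hab⟩, by rw [hv, Sym2.eq_swap]⟩

theorem dotProduct_adjMatrix_mulVec_indicator {α : Type*} [NonAssocSemiring α] (S : Finset V) :
    (fun u => if u ∈ S then (1 : α) else 0) ⬝ᵥ
        (G.adjMatrix α *ᵥ fun u => if u ∈ S then (1 : α) else 0) =
      ∑ v ∈ S, (#{u ∈ S | G.Adj v u} : α) := by
  simp only [dotProduct, adjMatrix_mulVec_apply, ite_mul, one_mul, zero_mul, sum_ite_mem,
    univ_inter]
  refine sum_congr rfl fun v _ => ?_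
  rw [sum_const, nsmul_one]
  congr 2
  ext u
  simp [and_comm]

theorem exists_card_adj_le_of_dotProduct_adjMatrix_mulVec_le {lam : ℝ}
    (hlam : ∀ x : V → ℝ, x ⬝ᵥ (G.adjMatrix ℝ *ᵥ x) ≤ lam * (x ⬝ᵥ x))
    {S : Finset V} (hS : S.Nonempty) : ∃ v ∈ S, (#{u ∈ S | G.Adj v u} : ℝ) ≤ lam := by
  apply exists_le_of_sum_le hS
  have h := hlam fun u => if u ∈ S then 1 else 0
  rw [dotProduct_adjMatrix_mulVec_indicator] at h
  simpa [dotProduct, sum_ite_mem, mul_comm] using h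

end SimpleGraph

/-- If the adjacency matrix of a finite simple graph `G` has maximum eigenvalue at most `lam`
(expressed via the quadratic form bound `xᵀ A x ≤ lam ‖x‖²` for all `x`, which for a symmetric
matrix is equivalent), then there is an orientation of the edges of `G` (a map `f` choosing a
source endpoint for each edge) such that every vertex has out-degree at most `lam`. -/
theorem stmt0 {V : Type*} [Fintype V] [DecidableEq V] (G : SimpleGraph V)
    [DecidableRel G.Adj] (lam : ℝ)
    (hlam : ∀ x : V → ℝ, x ⬝ᵥ ((G.adjMatrix ℝ) *ᵥ x) ≤ lam * (x ⬝ᵥ x)) :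
    ∃ f : Sym2 V → V, (∀ e ∈ G.edgeFinset, f e ∈ e) ∧
      ∀ v : V, ((G.edgeFinset.filter (fun e => f e = v)).card : ℝ) ≤ lam := by
  obtain ⟨r, hr, hr_le⟩ := G.exists_rank_injOn_of_forall_exists_card_adj_le
    (fun _ hS => G.exists_card_adj_le_of_dotProduct_adjMatrix_mulVec_le hlam hS) univ
  have hr : Function.Injective r := by simpa using hr
  refine ⟨Sym2.lowerEnd r hr, fun e _ => Sym2.lowerEnd_mem hr e, fun v => ?_⟩
  exact (Nat.cast_le.2 (G.card_filter_lowerEnd_eq_le hr v)).trans (hr_le v (mem_univ v))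
end

section
/- Let G be a bipartite graph with parts of sizes n₁ and n₂, average left-degree d₁ ≥ 1 and average right-degree d₂ ≥ 1, such that the maximum eigenvalue of its adjacency matrix is λ. Then (d₁ - 1)(d₂ - 1) ≤ λ². -/
/-!
Testing the Rayleigh-quotient bound on the vectors equal to `a` on `L` and `1` on `R` gives
`2 a |E| ≤ λ (a² |L| + |R|)` for every real `a`. This quadratic inequality in `a` forces its
discriminant to be nonpositive, i.e. `|E|² ≤ λ² |L| |R|`, which is `d₁ d₂ ≤ λ²`; and
`(d₁ - 1)(d₂ - 1) ≤ d₁ d₂` as soon as `d₁ ≥ 1`.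
-/

open Matrix Finset

section

variable {L R : Type*} [Fintype L] [Fintype R]

def biadjMatrix (E : L → R → Prop) [∀ l r, Decidable (E l r)] : Matrix L R ℝ :=
  of fun l r => if E l r then 1 else 0

lemma sum_biadjMatrix (E : L → R → Prop) [∀ l r, Decidable (E l r)] :
    ∑ l, ∑ r, biadjMatrix E l r = #(univ.filter fun p : L × R => E p.1 p.2) := by
  simp only [biadjMatrix, of_apply]
  rw [← Fintype.sum_prod_type', sum_boole]

lemma const_dotProduct_mulVec_const {α : Type*} [CommSemiring α] (B : Matrix L R α) (a b : α) :
    (fun _ => a) ⬝ᵥ (B *ᵥ fun _ => b) = a * b * ∑ l, ∑ r, B l r := by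
  simp only [dotProduct, mulVec, ← mul_sum, ← sum_mul]
  ring

lemma sumElim_dotProduct_fromBlocks_mulVec_sumElim {α : Type*} [CommSemiring α]
    (B : Matrix L R α) (u : L → α) (v : R → α) :
    Sum.elim u v ⬝ᵥ (fromBlocks 0 B Bᵀ 0 *ᵥ Sum.elim u v) = 2 * (u ⬝ᵥ (B *ᵥ v)) := by
  rw [fromBlocks_mulVec]
  simp only [Sum.elim_comp_inl, Sum.elim_comp_inr, zero_mulVec, zero_add, add_zero,
    dotProduct, Fintype.sum_sum_type, Sum.elim_inl, Sum.elim_inr]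
  rw [← dotProduct, ← dotProduct, mulVec_transpose, dotProduct_comm v, dotProduct_mulVec]
  ring

end

lemma sq_le_of_forall_two_mul_le {m lam p q : ℝ}
    (h : ∀ a : ℝ, 2 * a * m ≤ lam * (a ^ 2 * p + q)) : m ^ 2 ≤ lam ^ 2 * (p * q) := by
  have hdiscrim := discrim_le_zero (a := lam * p) (b := -2 * m) (c := lam * q) fun a => by
    nlinarith [h a]
  unfold discrim at hdiscrim
  nlinarith

theorem stmt2_general {L R : Type*} [Fintype L] [Fintype R]
    (E : L → R → Prop) [∀ l r, Decidable (E l r)] (lam : ℝ)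
    (A : Matrix (L ⊕ R) (L ⊕ R) ℝ)
    (hAlr : ∀ (l : L) (r : R), A (Sum.inl l) (Sum.inr r) = if E l r then 1 else 0)
    (hArl : ∀ (l : L) (r : R), A (Sum.inr r) (Sum.inl l) = if E l r then 1 else 0)
    (hAll : ∀ l l' : L, A (Sum.inl l) (Sum.inl l') = 0)
    (hArr : ∀ r r' : R, A (Sum.inr r) (Sum.inr r') = 0)
    (hlam : ∀ x : L ⊕ R → ℝ, x ⬝ᵥ (A *ᵥ x) ≤ lam * (x ⬝ᵥ x))
    (d₁ d₂ : ℝ)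
    (hd₁ : d₁ = ((Finset.univ.filter (fun p : L × R => E p.1 p.2)).card : ℝ) / Fintype.card L)
    (hd₂ : d₂ = ((Finset.univ.filter (fun p : L × R => E p.1 p.2)).card : ℝ) / Fintype.card R)
    (h1 : 1 ≤ d₁) :
    (d₁ - 1) * (d₂ - 1) ≤ lam ^ 2 := by
  have hA : A = fromBlocks 0 (biadjMatrix E) (biadjMatrix E)ᵀ 0 := by
    ext (l | r) (l' | r') <;> simp [biadjMatrix, hAlr, hArl, hAll, hArr]
  have hquad (a : ℝ) : 2 * a * #(univ.filter fun p : L × R => E p.1 p.2) ≤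
      lam * (a ^ 2 * Fintype.card L + Fintype.card R) := by
    have hrayleigh := hlam (Sum.elim (fun _ => a) (fun _ => 1))
    rw [hA, sumElim_dotProduct_fromBlocks_mulVec_sumElim, const_dotProduct_mulVec_const,
      sum_biadjMatrix] at hrayleigh
    simp only [dotProduct, Fintype.sum_sum_type, Sum.elim_inl, Sum.elim_inr, sum_const,
      card_univ, nsmul_eq_mul] at hrayleigh
    linear_combination hrayleigh
  have hprod : d₁ * d₂ ≤ lam ^ 2 := by
    rw [hd₁, hd₂, div_mul_div_comm, ← sq]
    exact div_le_of_le_mul₀ (by positivity) (sq_nonneg _) (sq_le_of_forall_two_mul_le hquad)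
  have hd₂_nonneg : 0 ≤ d₂ := hd₂ ▸ by positivity
  nlinarith

/-- For a finite bipartite graph on parts `L`, `R` with edge relation `E`, average left-degree
`d₁ = |E|/|L| ≥ 1` and average right-degree `d₂ = |E|/|R| ≥ 1`, if the maximum eigenvalue of the
symmetric adjacency matrix `A` on `L ⊕ R` is at most `lam` (quadratic form bound), then
`(d₁ - 1) * (d₂ - 1) ≤ lam ^ 2`. -/
theorem stmt2 {L R : Type*} [Fintype L] [Fintype R] [Nonempty L] [Nonempty R]
    (E : L → R → Prop) [∀ l r, Decidable (E l r)] (lam : ℝ)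
    (A : Matrix (L ⊕ R) (L ⊕ R) ℝ)
    (hAlr : ∀ (l : L) (r : R), A (Sum.inl l) (Sum.inr r) = if E l r then 1 else 0)
    (hArl : ∀ (l : L) (r : R), A (Sum.inr r) (Sum.inl l) = if E l r then 1 else 0)
    (hAll : ∀ l l' : L, A (Sum.inl l) (Sum.inl l') = 0)
    (hArr : ∀ r r' : R, A (Sum.inr r) (Sum.inr r') = 0)
    (hlam : ∀ x : L ⊕ R → ℝ, x ⬝ᵥ (A *ᵥ x) ≤ lam * (x ⬝ᵥ x))
    (d₁ d₂ : ℝ)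
    (hd₁ : d₁ = ((Finset.univ.filter (fun p : L × R => E p.1 p.2)).card : ℝ) / Fintype.card L)
    (hd₂ : d₂ = ((Finset.univ.filter (fun p : L × R => E p.1 p.2)).card : ℝ) / Fintype.card R)
    (h1 : 1 ≤ d₁) (h2 : 1 ≤ d₂) :
    (d₁ - 1) * (d₂ - 1) ≤ lam ^ 2 :=
  stmt2_general E lam A hAlr hArl hAll hArr hlam d₁ d₂ hd₁ hd₂ h1
end

section
/- Let G be an n-vertex d-regular graph whose second largest eigenvalue (in absolute value among nontrivial eigenvalues) is at most λ, i.e., the largest eigenvalue of A_G - (d/n)·J is at most λ, where J is the all-ones matrix. Let H be any subgraph of G whose edges are incident to at most εn vertices. Then the largest eigenvalue of the adjacency matrix of H is at most λ + εd. -/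
/-!
Replace `x` by `y = |x|` restricted to the non-isolated vertices `S` of `H`: then
`xᵀ A_H x ≤ yᵀ A_G y = yᵀ (A_G - (d/n) J) y + (d/n) (∑ y)² ≤ λ ‖y‖² + (d/n) |S| ‖y‖²`
by Cauchy–Schwarz on `S`, and `‖y‖ ≤ ‖x‖`. Passing from `λ ‖y‖²` to `λ ‖x‖²` needs `λ ≥ 0`,
which the all-ones vector gives since it is an eigenvector of `A_G - (d/n) J` with eigenvalue `0`.
-/

open Matrix Finset

namespace Matrix

variable {ι R : Type*} [Fintype ι] [CommRing R] [LinearOrder R] [IsStrictOrderedRing R]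

theorem dotProduct_mulVec_le_of_abs_le {A B : Matrix ι ι R} {S : Set ι}
    (hAB : ∀ i j, |A i j| ≤ B i j) (hS : ∀ i j, A i j ≠ 0 → i ∈ S ∧ j ∈ S) (x : ι → R) :
    x ⬝ᵥ A *ᵥ x ≤ S.indicator |x| ⬝ᵥ B *ᵥ S.indicator |x| := by
  simp only [dotProduct, mulVec, Finset.mul_sum]
  refine Finset.sum_le_sum fun i _ => Finset.sum_le_sum fun j _ => ?_
  by_cases hA : A i j = 0
  · have hB : 0 ≤ B i j := (abs_nonneg _).trans (hAB i j)
    rw [hA, zero_mul, mul_zero]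
    exact mul_nonneg (Set.indicator_nonneg (fun _ _ => abs_nonneg _) i)
      (mul_nonneg hB (Set.indicator_nonneg (fun _ _ => abs_nonneg _) j))
  · obtain ⟨hi, hj⟩ := hS i j hA
    rw [Set.indicator_of_mem hi, Set.indicator_of_mem hj, Pi.abs_apply, Pi.abs_apply]
    calc x i * (A i j * x j) ≤ |x i * (A i j * x j)| := le_abs_self _
      _ = |x i| * (|A i j| * |x j|) := by rw [abs_mul, abs_mul]
      _ ≤ |x i| * (B i j * |x j|) := by gcongr; exact hAB i j

omit [LinearOrder R] [IsStrictOrderedRing R] in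
theorem dotProduct_smul_of_one_mulVec (c : R) (x : ι → R) :
    x ⬝ᵥ (c • of fun _ _ : ι => (1 : R)) *ᵥ x = c * (∑ i, x i) ^ 2 := by
  simp only [dotProduct, mulVec, smul_apply, of_apply, smul_eq_mul, mul_one, ← Finset.mul_sum,
    ← Finset.sum_mul]
  ring

end Matrix

section IndicatorAbs

variable {ι R : Type*} [Fintype ι] [CommRing R] [LinearOrder R] [IsStrictOrderedRing R]

theorem indicator_abs_dotProduct_self_le (S : Set ι) (x : ι → R) :
    S.indicator |x| ⬝ᵥ S.indicator |x| ≤ x ⬝ᵥ x := by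
  refine Finset.sum_le_sum fun i _ => ?_
  by_cases hi : i ∈ S
  · rw [Set.indicator_of_mem hi, Pi.abs_apply, abs_mul_abs_self]
  · rw [Set.indicator_of_notMem hi, mul_zero]
    exact mul_self_nonneg _

theorem sq_sum_indicator_abs_le (S : Finset ι) (x : ι → R) :
    (∑ i, (S : Set ι).indicator |x| i) ^ 2 ≤ #S * (x ⬝ᵥ x) := by
  rw [Finset.sum_indicator_subset _ S.subset_univ]
  calc (∑ i ∈ S, |x| i) ^ 2 ≤ #S * ∑ i ∈ S, |x| i ^ 2 := sq_sum_le_card_mul_sum_sq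
    _ ≤ #S * (x ⬝ᵥ x) := by
      gcongr
      calc ∑ i ∈ S, |x| i ^ 2 ≤ ∑ i, |x| i ^ 2 :=
            Finset.sum_le_sum_of_subset_of_nonneg S.subset_univ fun _ _ _ => sq_nonneg _
        _ = x ⬝ᵥ x := by simp only [Pi.abs_apply, sq, abs_mul_abs_self, dotProduct]

end IndicatorAbs

namespace SimpleGraph

variable {V : Type*} {G H : SimpleGraph V} [DecidableRel G.Adj] [DecidableRel H.Adj]

theorem abs_adjMatrix_apply_le_of_le {R : Type*} [Ring R] [LinearOrder R] [IsStrictOrderedRing R]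
    (hHG : H ≤ G) (i j : V) : |H.adjMatrix R i j| ≤ G.adjMatrix R i j := by
  by_cases hH : H.Adj i j
  · simp [adjMatrix_apply, hH, hHG hH]
  · simp only [adjMatrix_apply, hH, if_false, abs_zero]
    split_ifs <;> norm_num

variable [Fintype V]

theorem degree_ne_zero_of_adjMatrix_apply_ne_zero {R : Type*} [Zero R] [One R] {i j : V}
    (h : H.adjMatrix R i j ≠ 0) :
    H.degree i ≠ 0 ∧ H.degree j ≠ 0 := by
  have hij : H.Adj i j := by
    by_contra hn
    simp [adjMatrix_apply, hn] at h
  exact ⟨(H.degree_pos_iff_exists_adj i).2 ⟨j, hij⟩ |>.ne',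
    (H.degree_pos_iff_exists_adj j).2 ⟨i, hij.symm⟩ |>.ne'⟩

theorem IsRegularOfDegree.nonneg_of_dotProduct_sub_mulVec_le [Nonempty V] {d : ℕ} {lam : ℝ}
    (hreg : G.IsRegularOfDegree d)
    (hlam : ∀ x : V → ℝ,
      x ⬝ᵥ ((G.adjMatrix ℝ - ((d : ℝ) / (Fintype.card V : ℝ)) • of fun _ _ => (1 : ℝ)) *ᵥ x)
        ≤ lam * (x ⬝ᵥ x)) :
    0 ≤ lam := by
  have hn : (0 : ℝ) < Fintype.card V := by exact_mod_cast Fintype.card_pos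
  have hone := hlam (Function.const V 1)
  have hA : Function.const V 1 ⬝ᵥ G.adjMatrix ℝ *ᵥ Function.const V 1 = Fintype.card V * d := by
    simp [dotProduct, hreg.degree_eq, mul_comm]
  rw [sub_mulVec, dotProduct_sub, hA, dotProduct_smul_of_one_mulVec] at hone
  simp only [Function.const_apply, sum_const, card_univ, nsmul_eq_mul, mul_one,
    dotProduct] at hone
  field_simp at hone
  nlinarith

end SimpleGraph

theorem stmt3_general {V : Type*} [Fintype V] (G H : SimpleGraph V)
    [DecidableRel G.Adj] [DecidableRel H.Adj] (d : ℕ) (lam eps : ℝ)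
    (hreg : G.IsRegularOfDegree d)
    (hlam : ∀ x : V → ℝ,
      x ⬝ᵥ ((G.adjMatrix ℝ - ((d : ℝ) / (Fintype.card V : ℝ)) • Matrix.of (fun _ _ => (1 : ℝ))) *ᵥ x)
        ≤ lam * (x ⬝ᵥ x))
    (hsub : H ≤ G)
    (hsupp : ((Finset.univ.filter (fun v : V => H.degree v ≠ 0)).card : ℝ)
      ≤ eps * (Fintype.card V : ℝ)) :
    ∀ x : V → ℝ, x ⬝ᵥ ((H.adjMatrix ℝ) *ᵥ x) ≤ (lam + eps * d) * (x ⬝ᵥ x) := by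
  intro x
  cases isEmpty_or_nonempty V
  · simp [dotProduct]
  set S := univ.filter fun v : V => H.degree v ≠ 0
  set y := (S : Set V).indicator |x|
  set c : ℝ := d / Fintype.card V
  have hn : (0 : ℝ) < Fintype.card V := by exact_mod_cast Fintype.card_pos
  have hxx : 0 ≤ x ⬝ᵥ x := Finset.sum_nonneg fun v _ => mul_self_nonneg (x v)
  have hlam0 : 0 ≤ lam := hreg.nonneg_of_dotProduct_sub_mulVec_le hlam
  have hHG : x ⬝ᵥ H.adjMatrix ℝ *ᵥ x ≤ y ⬝ᵥ G.adjMatrix ℝ *ᵥ y :=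
    dotProduct_mulVec_le_of_abs_le (SimpleGraph.abs_adjMatrix_apply_le_of_le hsub)
      (fun i j h => by simpa [S] using SimpleGraph.degree_ne_zero_of_adjMatrix_apply_ne_zero h) x
  have hrank : c * (∑ v, y v) ^ 2 ≤ eps * d * (x ⬝ᵥ x) :=
    calc c * (∑ v, y v) ^ 2 ≤ c * (#S * (x ⬝ᵥ x)) := by
          gcongr; exact sq_sum_indicator_abs_le S x
      _ ≤ c * (eps * Fintype.card V * (x ⬝ᵥ x)) := by gcongr
      _ = eps * d * (x ⬝ᵥ x) := by simp only [c]; field_simp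
  calc x ⬝ᵥ H.adjMatrix ℝ *ᵥ x ≤ y ⬝ᵥ G.adjMatrix ℝ *ᵥ y := hHG
    _ = y ⬝ᵥ (G.adjMatrix ℝ - c • of fun _ _ => (1 : ℝ)) *ᵥ y + c * (∑ v, y v) ^ 2 := by
      rw [sub_mulVec, dotProduct_sub, dotProduct_smul_of_one_mulVec]; ring
    _ ≤ lam * (y ⬝ᵥ y) + eps * d * (x ⬝ᵥ x) := add_le_add (hlam y) hrank
    _ ≤ lam * (x ⬝ᵥ x) + eps * d * (x ⬝ᵥ x) := by
      gcongr; exact indicator_abs_dotProduct_self_le _ x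
    _ = (lam + eps * d) * (x ⬝ᵥ x) := by ring

/-- Let `G` be an `n`-vertex `d`-regular graph such that the largest eigenvalue of
`A_G - (d/n)·J` is at most `lam` (quadratic form bound, `J` the all-ones matrix).
If `H` is a subgraph of `G` whose edges are incident to at most `ε·n` vertices, then
the largest eigenvalue of the adjacency matrix of `H` is at most `lam + ε·d`
(again expressed as a quadratic form bound, which is equivalent for symmetric matrices). -/
theorem stmt3 {V : Type*} [Fintype V] [DecidableEq V] (G H : SimpleGraph V)
    [DecidableRel G.Adj] [DecidableRel H.Adj] (d : ℕ) (lam eps : ℝ)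
    (hreg : G.IsRegularOfDegree d)
    (hlam : ∀ x : V → ℝ,
      x ⬝ᵥ ((G.adjMatrix ℝ - ((d : ℝ) / (Fintype.card V : ℝ)) • Matrix.of (fun _ _ => (1 : ℝ))) *ᵥ x)
        ≤ lam * (x ⬝ᵥ x))
    (hsub : H ≤ G)
    (hsupp : ((Finset.univ.filter (fun v : V => H.degree v ≠ 0)).card : ℝ)
      ≤ eps * (Fintype.card V : ℝ)) :
    ∀ x : V → ℝ, x ⬝ᵥ ((H.adjMatrix ℝ) *ᵥ x) ≤ (lam + eps * d) * (x ⬝ᵥ x) :=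
  stmt3_general G H d lam eps hreg hlam hsub hsupp
end

section
/- In the setting of the previous lemma, the ratio e(S, U_low)/(k|S|) is at least ((k−2)/k)·(1 − 2δ/(1 − δ(k−2))). In particular, since every vertex of S\S_{≥3} has at most 2 edges into U_high, we have e(S, U_low) ≥ ((k−2)/2)(1 − δk)·e(S, U_high). -/
/-!
Let `A` and `B` count the vertices of `S` with at most two, resp. at least three, neighbours
in `Uhigh`. Counting edges from the side of `S` gives `e(S, Uhigh) ≤ 2A + kB` and
`e(S, Uhigh) + e(S, Ulow) = k(A + B)`, hence `e(S, Ulow) ≥ (k - 2)A`. Every vertex of `Uhigh`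
has degree above `τ/δ`, so the hypothesis gives `B ≤ τ|Uhigh| ≤ δ e(S, Uhigh)`. Both bounds are
then elementary consequences of these inequalities.
-/

open Finset

section EdgeCounting

variable {S U : Type*} [Fintype S] (adj : S → U → Prop) [∀ s u, Decidable (adj s u)]

theorem sum_card_filter_adj_eq_sum_card_filter (T : Finset U) :
    ∑ u ∈ T, #{s | adj s u} = ∑ s, #(T.filter (adj s)) :=
  (sum_card_bipartiteAbove_eq_sum_card_bipartiteBelow (r := fun u s => adj s u)).trans rfl

theorem sum_card_filter_adj_add_sum_compl [Fintype U] [DecidableEq U] {k : ℕ}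
    (hdeg : ∀ s, #{u | adj s u} = k) (T : Finset U) :
    ∑ u ∈ T, #{s | adj s u} + ∑ u ∈ Tᶜ, #{s | adj s u} = k * Fintype.card S := by
  rw [sum_add_sum_compl, sum_card_filter_adj_eq_sum_card_filter]
  simp [hdeg, mul_comm]

end EdgeCounting

theorem sum_le_two_mul_card_add_mul_card {S : Type*} [Fintype S] (f : S → ℕ) {k : ℕ}
    (hf : ∀ s, f s ≤ k) :
    ∑ s, f s ≤ 2 * #{s | ¬ 3 ≤ f s} + k * #{s | 3 ≤ f s} := by
  have hLow : ∑ s with ¬ 3 ≤ f s, f s ≤ #{s | ¬ 3 ≤ f s} • 2 :=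
    sum_le_card_nsmul _ f 2 fun s hs => by
      have : ¬ 3 ≤ f s := (mem_filter.1 hs).2
      omega
  have hHigh : ∑ s with 3 ≤ f s, f s ≤ #{s | 3 ≤ f s} • k :=
    sum_le_card_nsmul _ f k fun s _ => hf s
  rw [← sum_filter_add_sum_filter_not univ (fun s => 3 ≤ f s), add_comm]
  rw [smul_eq_mul] at hLow hHigh
  linarith

theorem mul_card_le_mul_sum_of_div_le {ι : Type*} (T : Finset ι) (f : ι → ℝ) {τ δ : ℝ}
    (hδ : 0 < δ) (hf : ∀ u ∈ T, τ / δ ≤ f u) : τ * #T ≤ δ * ∑ u ∈ T, f u := by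
  have := card_nsmul_le_sum T f _ hf
  rw [nsmul_eq_mul] at this
  calc τ * #T = δ * (#T * (τ / δ)) := by field_simp
    _ ≤ δ * ∑ u ∈ T, f u := by gcongr

section EdgeArithmetic

variable {k δ A B eH eL : ℝ}

theorem sub_two_mul_le_of_add_eq (hH : eH ≤ 2 * A + k * B) (hL : eH + eL = k * (A + B)) :
    (k - 2) * A ≤ eL := by
  linarith

theorem sub_two_div_two_mul_le (hδk : δ * k ≤ 1) (hB : B ≤ δ * eH)
    (hH : eH ≤ 2 * A + k * B) (hL : eH + eL = k * (A + B)) (hH0 : 0 ≤ eH) (hL0 : 0 ≤ eL) :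
    (k - 2) / 2 * (1 - δ * k) * eH ≤ eL := by
  rcases le_or_gt 2 k with hk | hk
  · have hLow : (1 - δ * k) * eH ≤ 2 * A := by nlinarith
    nlinarith [sub_two_mul_le_of_add_eq hH hL]
  · have hcoeff : (k - 2) / 2 * (1 - δ * k) ≤ 0 :=
      mul_nonpos_of_nonpos_of_nonneg (by linarith) (by linarith)
    nlinarith

theorem one_sub_two_mul_div_eq (h : 1 - δ * (k - 2) ≠ 0) :
    1 - 2 * δ / (1 - δ * (k - 2)) = (1 - δ * k) / (1 - δ * (k - 2)) := by
  field_simp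
  ring

theorem sub_two_div_mul_le_div (hk : 0 ≤ k) (hn : 0 < A + B) (hδ : 0 < δ) (hδk : δ * k ≤ 1)
    (hB : B ≤ δ * eH) (hH : eH ≤ 2 * A + k * B) (hL : eH + eL = k * (A + B)) (hL0 : 0 ≤ eL) :
    (k - 2) / k * (1 - 2 * δ / (1 - δ * (k - 2))) ≤ eL / (k * (A + B)) := by
  have hD : 0 < 1 - δ * (k - 2) := by linarith
  rw [one_sub_two_mul_div_eq hD.ne']
  rcases le_or_gt 2 k with hk2 | hk2
  · have key : (k - 2) * (A + B) * (1 - δ * k) ≤ eL * (1 - δ * (k - 2)) := by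
      nlinarith [sub_two_mul_le_of_add_eq hH hL]
    rw [div_mul_div_comm, div_le_div_iff₀ (by positivity) (by positivity)]
    nlinarith [mul_le_mul_of_nonneg_left key hk]
  · have hLHS : (k - 2) / k * ((1 - δ * k) / (1 - δ * (k - 2))) ≤ 0 :=
      mul_nonpos_of_nonpos_of_nonneg (div_nonpos_of_nonpos_of_nonneg (by linarith) hk)
        (div_nonneg (by linarith) hD.le)
    exact hLHS.trans (by positivity)

end EdgeArithmetic

theorem stmt7_general {S U : Type*} [Fintype S] [Fintype U] [DecidableEq U] [Nonempty S]
    (adj : S → U → Prop) [∀ s u, Decidable (adj s u)] (k : ℕ) (τ δ : ℝ)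
    (hδ : 0 < δ) (hδk : δ * k ≤ 1 / 2)
    (hdeg : ∀ s : S, (Finset.univ.filter (fun u => adj s u)).card = k)
    (Uhigh : Finset U)
    (hUhigh : Uhigh = Finset.univ.filter
      (fun u => τ / δ < ((Finset.univ.filter (fun s => adj s u)).card : ℝ)))
    (htri : ((Finset.univ.filter
        (fun s : S => 3 ≤ (Uhigh.filter (fun u => adj s u)).card)).card : ℝ)
      ≤ τ * Uhigh.card) :
    ((k : ℝ) - 2) / 2 * (1 - δ * k)
        * (∑ u ∈ Uhigh, ((Finset.univ.filter (fun s => adj s u)).card : ℝ))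
      ≤ (∑ u ∈ Uhighᶜ, ((Finset.univ.filter (fun s => adj s u)).card : ℝ)) ∧
    ((k : ℝ) - 2) / k * (1 - 2 * δ / (1 - δ * ((k : ℝ) - 2)))
      ≤ (∑ u ∈ Uhighᶜ, ((Finset.univ.filter (fun s => adj s u)).card : ℝ))
          / (k * Fintype.card S) := by
  set eH : ℝ := ∑ u ∈ Uhigh, (#{s | adj s u} : ℝ)
  set eL : ℝ := ∑ u ∈ Uhighᶜ, (#{s | adj s u} : ℝ)
  set A : ℝ := ↑(#{s | ¬ 3 ≤ #(Uhigh.filter (adj s))})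
  set B : ℝ := ↑(#{s | 3 ≤ #(Uhigh.filter (adj s))})
  have hn : (Fintype.card S : ℝ) = A + B := by
    simp only [A, B, add_comm, ← card_univ]
    exact_mod_cast (card_filter_add_card_filter_not _).symm
  have hn0 : 0 < A + B := hn ▸ by exact_mod_cast Fintype.card_pos
  have hL : eH + eL = k * (A + B) := by
    simp only [eH, eL, ← hn]
    exact_mod_cast sum_card_filter_adj_add_sum_compl adj hdeg Uhigh
  have hH : eH ≤ 2 * A + k * B := by
    have := sum_le_two_mul_card_add_mul_card (fun s => #(Uhigh.filter (adj s))) fun s =>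
      hdeg s ▸ card_le_card (filter_subset_filter _ (subset_univ Uhigh))
    rw [← sum_card_filter_adj_eq_sum_card_filter] at this
    simp only [eH, A, B]
    exact_mod_cast this
  have hB : B ≤ δ * eH := htri.trans <| mul_card_le_mul_sum_of_div_le _ _ hδ fun u hu => by
    rw [hUhigh] at hu
    exact (mem_filter.1 hu).2.le
  rw [hn]
  exact ⟨sub_two_div_two_mul_le (by linarith) hB hH hL (by positivity) (by positivity),
    sub_two_div_mul_le_div (by positivity) hn0 hδ (by linarith) hB hH hL (by positivity)⟩

/-- In the setting of the previous lemma (bipartite `Γ` on `(S,U)` with left-degree exactly `k`,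
`Uhigh = {u : deg(u) > τ/δ}`, triangle-expansion hypothesis `|S_{≥3}| ≤ τ|Uhigh|`, `δk ≤ 1/2`,
`S` nonempty): `e(S, Ulow) ≥ ((k−2)/2)(1 − δk)·e(S, Uhigh)`, and the ratio
`e(S, Ulow)/(k|S|)` is at least `((k−2)/k)·(1 − 2δ/(1 − δ(k−2)))`. -/
theorem stmt7 {S U : Type*} [Fintype S] [Fintype U] [DecidableEq U] [Nonempty S]
    (adj : S → U → Prop) [∀ s u, Decidable (adj s u)] (k : ℕ) (τ δ : ℝ)
    (hτ : 0 < τ) (hδ : 0 < δ) (hδk : δ * k ≤ 1 / 2)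
    (hdeg : ∀ s : S, (Finset.univ.filter (fun u => adj s u)).card = k)
    (Uhigh : Finset U)
    (hUhigh : Uhigh = Finset.univ.filter
      (fun u => τ / δ < ((Finset.univ.filter (fun s => adj s u)).card : ℝ)))
    (htri : ((Finset.univ.filter
        (fun s : S => 3 ≤ (Uhigh.filter (fun u => adj s u)).card)).card : ℝ)
      ≤ τ * Uhigh.card) :
    ((k : ℝ) - 2) / 2 * (1 - δ * k)
        * (∑ u ∈ Uhigh, ((Finset.univ.filter (fun s => adj s u)).card : ℝ))
      ≤ (∑ u ∈ Uhighᶜ, ((Finset.univ.filter (fun s => adj s u)).card : ℝ)) ∧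
    ((k : ℝ) - 2) / k * (1 - 2 * δ / (1 - δ * ((k : ℝ) - 2)))
      ≤ (∑ u ∈ Uhighᶜ, ((Finset.univ.filter (fun s => adj s u)).card : ℝ))
          / (k * Fintype.card S) :=
  stmt7_general adj k τ δ hδ hδk hdeg Uhigh hUhigh htri
end

section
/- Let B be a bipartite graph between sets P and Q in which every vertex of P has degree greater than λ/δ, and the largest eigenvalue of the adjacency matrix of B is at most λ. Then the average degree of Q satisfies deg_avg(Q) ≤ δλ + 1, and consequently |P| ≤ ((δλ + 1)·δ/λ)·|Q| ≤ 2δ²|Q| when δλ ≥ 1. -/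
/-!
Let `m = |P|`, `n = |Q|` and let `e` be the number of edges. Summing the degree bound over `P`
gives `λ m ≤ δ e`. Testing the eigenvalue bound on the vector equal to `t` on `P` and `1` on `Q`
gives `2 t e ≤ λ (m t² + n)` for every real `t`, so the discriminant of this quadratic is
nonpositive: `e² ≤ λ² m n`. Combining the two, `e² ≤ λ δ e n`, i.e. `e ≤ δ λ n`, and then
`λ m ≤ δ e ≤ δ² λ n` gives `m ≤ δ² n`.
-/

open Matrix Finset

section BipartiteQuadraticForm

variable {K : Type*} {m n : Type*} [Fintype m] [Fintype n]

theorem const_dotProduct_mulVec_const_s18 [CommSemiring K] (M : Matrix m n K) (a b : K) :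
    (fun _ => a) ⬝ᵥ (M *ᵥ fun _ => b) = a * b * ∑ i, ∑ j, M i j := by
  simp only [dotProduct, mulVec, mul_sum]
  exact sum_congr rfl fun _ _ => sum_congr rfl fun _ _ => by ring

theorem sumElim_const_dotProduct_fromBlocks_mulVec [CommSemiring K] (M : Matrix m n K) (a b : K) :
    Sum.elim (fun _ => a) (fun _ => b) ⬝ᵥ
        (fromBlocks 0 M Mᵀ 0 *ᵥ Sum.elim (fun _ => a) (fun _ => b)) =
      2 * a * b * ∑ i, ∑ j, M i j := by
  rw [fromBlocks_mulVec]
  simp only [zero_mulVec, zero_add, add_zero, Sum.elim_comp_inl, Sum.elim_comp_inr]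
  rw [sumElim_dotProduct_sumElim, const_dotProduct_mulVec_const_s18, const_dotProduct_mulVec_const_s18]
  simp only [transpose_apply]
  rw [sum_comm]
  ring

theorem sumElim_const_dotProduct_self [CommSemiring K] (a b : K) :
    Sum.elim (fun _ : m => a) (fun _ : n => b) ⬝ᵥ Sum.elim (fun _ => a) (fun _ => b) =
      Fintype.card m * a ^ 2 + Fintype.card n * b ^ 2 := by
  simp [dotProduct, sq]

theorem sq_sum_le_of_dotProduct_fromBlocks_mulVec_le [Field K] [LinearOrder K]
    [IsStrictOrderedRing K] (M : Matrix m n K) (lam : K)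
    (h : ∀ x, x ⬝ᵥ (fromBlocks 0 M Mᵀ 0 *ᵥ x) ≤ lam * (x ⬝ᵥ x)) :
    (∑ i, ∑ j, M i j) ^ 2 ≤ lam ^ 2 * Fintype.card m * Fintype.card n := by
  have hquad : ∀ t : K, 0 ≤ lam * Fintype.card m * (t * t) + (-2 * ∑ i, ∑ j, M i j) * t
      + lam * Fintype.card n := fun t => by
    have := h (Sum.elim (fun _ => t) (fun _ => 1))
    rw [sumElim_const_dotProduct_fromBlocks_mulVec, sumElim_const_dotProduct_self] at this
    linarith
  have := discrim_le_zero hquad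
  rw [discrim] at this
  linarith

end BipartiteQuadraticForm

theorem le_mul_and_le_sq_mul_of_mul_le_of_sq_le {K : Type*} [Field K] [LinearOrder K]
    [IsStrictOrderedRing K]
    {lam δ m n e : K} (hδ : 0 < δ) (hlam : 0 < lam) (hn : 0 ≤ n) (he : 0 ≤ e)
    (hlow : lam * m ≤ δ * e) (hup : e ^ 2 ≤ lam ^ 2 * m * n) :
    e ≤ δ * lam * n ∧ m ≤ δ ^ 2 * n := by
  have hedge : e ≤ δ * lam * n := by
    rcases he.eq_or_lt with rfl | he
    · positivity
    · refine le_of_mul_le_mul_left ?_ he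
      nlinarith [mul_le_mul_of_nonneg_left hlow (mul_nonneg hlam.le hn)]
  refine ⟨hedge, le_of_mul_le_mul_left ?_ hlam⟩
  nlinarith [mul_le_mul_of_nonneg_left hedge hδ.le]

theorem stmt18_general {P Q : Type*} [Fintype P] [Fintype Q]
    (adj : P → Q → Prop) [∀ p q, Decidable (adj p q)] (lam δ : ℝ)
    (hδ : 0 < δ) (hδlam : 1 ≤ δ * lam)
    (hPdeg : ∀ p : P, lam / δ < ((Finset.univ.filter (fun q => adj p q)).card : ℝ))
    (A : Matrix (P ⊕ Q) (P ⊕ Q) ℝ)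
    (hAlr : ∀ (p : P) (q : Q), A (Sum.inl p) (Sum.inr q) = if adj p q then 1 else 0)
    (hArl : ∀ (p : P) (q : Q), A (Sum.inr q) (Sum.inl p) = if adj p q then 1 else 0)
    (hAll : ∀ p p' : P, A (Sum.inl p) (Sum.inl p') = 0)
    (hArr : ∀ q q' : Q, A (Sum.inr q) (Sum.inr q') = 0)
    (hlam : ∀ x : P ⊕ Q → ℝ, x ⬝ᵥ (A *ᵥ x) ≤ lam * (x ⬝ᵥ x)) :
    (((Finset.univ : Finset (P × Q)).filter (fun pq => adj pq.1 pq.2)).card : ℝ)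
        / Fintype.card Q ≤ δ * lam + 1 ∧
    (Fintype.card P : ℝ) ≤ (δ * lam + 1) * δ / lam * Fintype.card Q ∧
    (Fintype.card P : ℝ) ≤ 2 * δ ^ 2 * Fintype.card Q := by
  have hlam_pos : 0 < lam := pos_of_mul_pos_right (by linarith) hδ.le
  set M : Matrix P Q ℝ := of fun p q => if adj p q then 1 else 0
  have hA : A = fromBlocks 0 M Mᵀ 0 := by
    ext (p | q) (p' | q') <;> simp [M, hAll, hAlr, hArl, hArr]
  have hdeg (p : P) : ∑ q, M p q = #(univ.filter (adj p)) := by simp [M]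
  have hedges : (#(univ.filter fun pq : P × Q => adj pq.1 pq.2) : ℝ) = ∑ p, ∑ q, M p q := by
    simp only [M, of_apply]
    rw [← Fintype.sum_prod_type', sum_boole]
  have hlow : lam * Fintype.card P ≤ δ * ∑ p, ∑ q, M p q := by
    have := card_nsmul_le_sum univ _ (lam / δ) fun p _ => (hdeg p ▸ hPdeg p).le
    rw [nsmul_eq_mul, card_univ, mul_div_assoc', div_le_iff₀ hδ] at this
    linarith
  have hup := sq_sum_le_of_dotProduct_fromBlocks_mulVec_le M lam (hA ▸ hlam)
  obtain ⟨hedge, hcard⟩ := le_mul_and_le_sq_mul_of_mul_le_of_sq_le hδ hlam_pos (by positivity)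
    (hedges ▸ by positivity) hlow hup
  rw [hedges]
  refine ⟨div_le_of_le_mul₀ (by positivity) (by positivity) (by linarith), ?_, ?_⟩
  · calc (Fintype.card P : ℝ) ≤ δ ^ 2 * Fintype.card Q := hcard
      _ ≤ (δ * lam + 1) * δ / lam * Fintype.card Q := by
        gcongr
        rw [le_div_iff₀ hlam_pos]
        nlinarith
  · nlinarith [sq_nonneg δ]

/-- `B` is a bipartite graph on `(P, Q)` in which every vertex of `P` has degree greater than
`lam/δ`, and the largest eigenvalue of its adjacency matrix is at most `lam` (quadratic form
bound). Then the average degree of `Q` is at most `δ·lam + 1`, and consequently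
`|P| ≤ ((δ·lam + 1)·δ/lam)·|Q| ≤ 2δ²·|Q|` when `δ·lam ≥ 1`. -/
theorem stmt18 {P Q : Type*} [Fintype P] [Fintype Q] [Nonempty P] [Nonempty Q]
    (adj : P → Q → Prop) [∀ p q, Decidable (adj p q)] (lam δ : ℝ)
    (hδ : 0 < δ) (hδlam : 1 ≤ δ * lam)
    (hPdeg : ∀ p : P, lam / δ < ((Finset.univ.filter (fun q => adj p q)).card : ℝ))
    (A : Matrix (P ⊕ Q) (P ⊕ Q) ℝ)
    (hAlr : ∀ (p : P) (q : Q), A (Sum.inl p) (Sum.inr q) = if adj p q then 1 else 0)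
    (hArl : ∀ (p : P) (q : Q), A (Sum.inr q) (Sum.inl p) = if adj p q then 1 else 0)
    (hAll : ∀ p p' : P, A (Sum.inl p) (Sum.inl p') = 0)
    (hArr : ∀ q q' : Q, A (Sum.inr q) (Sum.inr q') = 0)
    (hlam : ∀ x : P ⊕ Q → ℝ, x ⬝ᵥ (A *ᵥ x) ≤ lam * (x ⬝ᵥ x)) :
    (((Finset.univ : Finset (P × Q)).filter (fun pq => adj pq.1 pq.2)).card : ℝ)
        / Fintype.card Q ≤ δ * lam + 1 ∧
    (Fintype.card P : ℝ) ≤ (δ * lam + 1) * δ / lam * Fintype.card Q ∧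
    (Fintype.card P : ℝ) ≤ 2 * δ ^ 2 * Fintype.card Q :=
  stmt18_general adj lam δ hδ hδlam hPdeg A hAlr hArl hAll hArr hlam
end
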